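/- arXiv:2108.07385 — 7 statements merged into one kernel-verified Lean document; each statement's English description precedes it below -/
import Mathlib

section
/- For every ũ ∈ ℝ^M and every ψ ∈ V (not necessarily in V_h), one has the error estimate |ũᵀ M̃ σ(ψ) − B(Ĩ ũ, ψ)| ≤ ‖id_V − Π‖ · ‖Ĩ‖ · ‖ũ‖ · ‖ψ‖, where ‖id_V − Π‖ and ‖Ĩ‖ are operator norms. Hence the twisted interpolation Ĩ approximates the adjoint of the degrees of freedom operator σ with respect to the Poincaré pairing, with error controlled by the projection error ‖id_V − Π‖ (estimate part of the paper's Proposition on the adjoint of the degrees of freedom operator). -/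
lemma euclid_decomp {n : ℕ} (x : EuclideanSpace ℝ (Fin n)) :
    x = ∑ i, x i • EuclideanSpace.single i (1:ℝ) := by
  have := (EuclideanSpace.basisFun (Fin n) ℝ).sum_repr x
  simpa [EuclideanSpace.basisFun_apply, EuclideanSpace.basisFun_repr] using this.symm

lemma bilin_sum_sum {W V : Type*} [NormedAddCommGroup W] [NormedSpace ℝ W]
    [NormedAddCommGroup V] [NormedSpace ℝ V]
    (B : W →L[ℝ] V →L[ℝ] ℝ) {m n : ℕ} (a : Fin m → ℝ) (b : Fin n → ℝ)
    (w : Fin m → W) (v : Fin n → V) :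
    B (∑ i, a i • w i) (∑ j, b j • v j) = ∑ i, ∑ j, a i * b j * B (w i) (v j) := by
  rw [map_sum]
  simp only [ContinuousLinearMap.coe_sum', Finset.sum_apply, map_smul,
    ContinuousLinearMap.smul_apply, map_sum, smul_eq_mul, Finset.mul_sum]
  rw [Finset.sum_comm]
  exact Finset.sum_congr rfl fun i _ => Finset.sum_congr rfl fun j _ => by ring

/-- Estimate part of the Proposition on the adjoint of the degrees of
freedom operator: for every `u ∈ ℝ^M` and every `ψ ∈ V` one has
`|uᵀ M̃ σ(ψ) − B(It u, ψ)| ≤ ‖id_V − Π‖ ‖It‖ ‖u‖ ‖ψ‖`, where `Π = I ∘ σ`. -/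
theorem poincare_adjoint_of_dof_estimate
    {W V : Type*} [NormedAddCommGroup W] [NormedSpace ℝ W]
    [NormedAddCommGroup V] [NormedSpace ℝ V]
    (B : W →L[ℝ] V →L[ℝ] ℝ)
    (hB : ∀ (w : W) (v : V), |B w v| ≤ ‖w‖ * ‖v‖)
    {N M : ℕ}
    (σ : V →L[ℝ] EuclideanSpace ℝ (Fin N))
    (I : EuclideanSpace ℝ (Fin N) →L[ℝ] V)
    (hσI : ∀ c, σ (I c) = c)
    (It : EuclideanSpace ℝ (Fin M) →L[ℝ] W)
    (Mt : Matrix (Fin M) (Fin N) ℝ)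
    (hMt : ∀ i j, Mt i j =
      B (It (EuclideanSpace.single i 1)) (I (EuclideanSpace.single j 1)))
    (u : EuclideanSpace ℝ (Fin M)) (ψ : V) :
    |(∑ i, u i * ∑ j, Mt i j * σ ψ j) - B (It u) ψ| ≤
      ‖ContinuousLinearMap.id ℝ V - I.comp σ‖ * ‖It‖ * ‖u‖ * ‖ψ‖ := by
  have hItu : It u = ∑ i, u i • It (EuclideanSpace.single i 1) := by
    conv_lhs => rw [euclid_decomp u]
    simp [map_sum, map_smul]
  have hIσψ : I (σ ψ) = ∑ j, σ ψ j • I (EuclideanSpace.single j 1) := by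
    conv_lhs => rw [euclid_decomp (σ ψ)]
    simp [map_sum, map_smul]
  have key : (∑ i, u i * ∑ j, Mt i j * σ ψ j) = B (It u) (I (σ ψ)) := by
    rw [hItu, hIσψ, bilin_sum_sum]
    refine Finset.sum_congr rfl fun i _ => ?_
    rw [Finset.mul_sum]
    exact Finset.sum_congr rfl fun j _ => by rw [hMt]; ring
  have h1 : |B (It u) (I (σ ψ)) - B (It u) ψ| ≤ ‖It u‖ * ‖I (σ ψ) - ψ‖ := by
    rw [← map_sub]; exact hB _ _
  have h2 : ‖I (σ ψ) - ψ‖ ≤ ‖ContinuousLinearMap.id ℝ V - I.comp σ‖ * ‖ψ‖ := by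
    have := (ContinuousLinearMap.id ℝ V - I.comp σ).le_opNorm ψ
    simpa [norm_sub_rev] using this
  have h3 : ‖It u‖ ≤ ‖It‖ * ‖u‖ := It.le_opNorm u
  rw [key]
  calc |B (It u) (I (σ ψ)) - B (It u) ψ| ≤ ‖It u‖ * ‖I (σ ψ) - ψ‖ := h1
    _ ≤ (‖It‖ * ‖u‖) * (‖ContinuousLinearMap.id ℝ V - I.comp σ‖ * ‖ψ‖) := by
        gcongr <;> positivity
    _ = ‖ContinuousLinearMap.id ℝ V - I.comp σ‖ * ‖It‖ * ‖u‖ * ‖ψ‖ := by ring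
end

section
/- For every u ∈ ℝ^N and every ψ ∈ V (not necessarily in V_h), one has the error estimate |uᵀ M σ(ψ) − ⟨I u, ψ⟩| ≤ ‖id_V − Π‖ · ‖I‖ · ‖u‖ · ‖ψ‖, where ‖id_V − Π‖ and ‖I‖ are operator norms. Hence the interpolation operator I approximates the L² adjoint of the degrees of freedom operator σ, with error controlled by the projection error ‖id_V − Π‖ (estimate part of the paper's Proposition on the L² adjoint of the degrees of freedom operator). -/
/-! Since `M` is the Gram matrix of the basis functions `I eᵢ`, the quadratic form `uᵀ M σ(ψ)`
equals `⟨I u, Π ψ⟩`; the error is therefore `⟨I u, (Π - id) ψ⟩`, and Cauchy–Schwarz bounds it. -/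

open Matrix
open scoped InnerProductSpace

section Gram

variable {𝕜 E ι : Type*} [RCLike 𝕜] [SeminormedAddCommGroup E] [InnerProductSpace 𝕜 E]
  [Fintype ι] [DecidableEq ι]

theorem inner_map_eq_star_dotProduct_gram_mulVec (L : EuclideanSpace 𝕜 ι →ₗ[𝕜] E)
    (a b : EuclideanSpace 𝕜 ι) :
    ⟪L a, L b⟫_𝕜 = star (a : ι → 𝕜) ⬝ᵥ gram 𝕜 (fun i ↦ L (EuclideanSpace.single i 1)) *ᵥ b := by
  have hL : ∀ c : EuclideanSpace 𝕜 ι, L c = ∑ i, c i • L (EuclideanSpace.single i 1) := fun c ↦ by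
    conv_lhs => rw [← (EuclideanSpace.basisFun ι 𝕜).sum_repr c]
    simp
  rw [star_dotProduct_gram_mulVec, hL a, hL b]

end Gram

theorem norm_inner_map_sub_inner_le {𝕜 E : Type*} [RCLike 𝕜] [SeminormedAddCommGroup E]
    [InnerProductSpace 𝕜 E] (P : E →L[𝕜] E) (x y : E) :
    ‖⟪x, P y⟫_𝕜 - ⟪x, y⟫_𝕜‖ ≤ ‖ContinuousLinearMap.id 𝕜 E - P‖ * ‖x‖ * ‖y‖ :=
  calc ‖⟪x, P y⟫_𝕜 - ⟪x, y⟫_𝕜‖ = ‖⟪x, (ContinuousLinearMap.id 𝕜 E - P) y⟫_𝕜‖ := by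
        rw [← inner_sub_right, ← norm_neg, ← inner_neg_right, neg_sub]; rfl
    _ ≤ ‖x‖ * ‖(ContinuousLinearMap.id 𝕜 E - P) y‖ := norm_inner_le_norm _ _
    _ ≤ ‖x‖ * (‖ContinuousLinearMap.id 𝕜 E - P‖ * ‖y‖) := by
        gcongr; exact ContinuousLinearMap.le_opNorm _ _
    _ = ‖ContinuousLinearMap.id 𝕜 E - P‖ * ‖x‖ * ‖y‖ := by ring

theorem L2_adjoint_of_dof_estimate_general
    {V : Type*} [NormedAddCommGroup V] [InnerProductSpace ℝ V]
    {N : ℕ}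
    (σ : V →L[ℝ] EuclideanSpace ℝ (Fin N))
    (I : EuclideanSpace ℝ (Fin N) →L[ℝ] V)
    (Mmat : Matrix (Fin N) (Fin N) ℝ)
    (hM : ∀ i j, Mmat i j =
      (inner ℝ (I (EuclideanSpace.single i 1)) (I (EuclideanSpace.single j 1)) : ℝ))
    (u : EuclideanSpace ℝ (Fin N)) (ψ : V) :
    |(∑ i, u i * ∑ j, Mmat i j * σ ψ j) - (inner ℝ (I u) ψ : ℝ)| ≤
      ‖ContinuousLinearMap.id ℝ V - I.comp σ‖ * ‖I‖ * ‖u‖ * ‖ψ‖ := by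
  have hgram : Mmat = gram ℝ (fun i ↦ I (EuclideanSpace.single i 1)) := Matrix.ext hM
  have hquad : ∑ i, u i * ∑ j, Mmat i j * σ ψ j = ⟪I u, I (σ ψ)⟫_ℝ := by
    rw [hgram]; exact (inner_map_eq_star_dotProduct_gram_mulVec I.toLinearMap u (σ ψ)).symm
  rw [hquad, ← Real.norm_eq_abs, mul_assoc _ ‖I‖]
  calc ‖⟪I u, (I.comp σ) ψ⟫_ℝ - ⟪I u, ψ⟫_ℝ‖
      ≤ ‖ContinuousLinearMap.id ℝ V - I.comp σ‖ * ‖I u‖ * ‖ψ‖ :=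
        norm_inner_map_sub_inner_le _ _ _
    _ ≤ ‖ContinuousLinearMap.id ℝ V - I.comp σ‖ * (‖I‖ * ‖u‖) * ‖ψ‖ := by
        gcongr; exact I.le_opNorm u

/-- Estimate part of the Proposition on the L² adjoint of the degrees of
freedom operator: for every `u ∈ ℝ^N` and every `ψ ∈ V`,
`|uᵀ M σ(ψ) − ⟨I u, ψ⟩| ≤ ‖id_V − Π‖ ‖I‖ ‖u‖ ‖ψ‖`, where `Π = I ∘ σ`. -/
theorem L2_adjoint_of_dof_estimate
    {V : Type*} [NormedAddCommGroup V] [InnerProductSpace ℝ V]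
    {N : ℕ}
    (σ : V →L[ℝ] EuclideanSpace ℝ (Fin N))
    (I : EuclideanSpace ℝ (Fin N) →L[ℝ] V)
    (hσI : ∀ c, σ (I c) = c)
    (Mmat : Matrix (Fin N) (Fin N) ℝ)
    (hM : ∀ i j, Mmat i j =
      (inner ℝ (I (EuclideanSpace.single i 1)) (I (EuclideanSpace.single j 1)) : ℝ))
    (u : EuclideanSpace ℝ (Fin N)) (ψ : V) :
    |(∑ i, u i * ∑ j, Mmat i j * σ ψ j) - (inner ℝ (I u) ψ : ℝ)| ≤
      ‖ContinuousLinearMap.id ℝ V - I.comp σ‖ * ‖I‖ * ‖u‖ * ‖ψ‖ :=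
  L2_adjoint_of_dof_estimate_general σ I Mmat hM u ψ
end

section
/- For all ũ ∈ ℝ^M and v ∈ ℝ^N one has |ũᵀ M̃_W H̃ v − ε · ũᵀ M̃_P v| ≤ ‖id_W − Ĩ∘σ̃‖ · ‖Ĩ‖ · ‖⋆‖ · ‖I‖ · ‖ũ‖ · ‖v‖, where the first four factors are operator norms. Hence the natural discrete Hodge matrix H̃ and the Galerkin projection discrete Hodge data (M̃_W)⁻¹ ε M̃_P agree, in the sense ũᵀ M̃_W H̃ v = ε ũᵀ M̃_P v up to an error controlled by the projection error ‖id_W − Ĩ∘σ̃‖ (the paper's Proposition relating the Galerkin projection and natural Hodge star operators). -/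
/-!
With the Gram and Poincaré matrices read as coordinate expressions of bilinear forms,
`ũᵀ M̃_W H̃ v = ⟪Ĩ ũ, Ĩ (σ̃ (⋆ (I v)))⟫` and `ε ũᵀ M̃_P v = ⟪Ĩ ũ, ⋆ (I v)⟫`. Their difference is
`-⟪Ĩ ũ, (id - Ĩ ∘ σ̃) (⋆ (I v))⟫`, and Cauchy–Schwarz with the operator-norm bounds gives the
estimate.
-/

open Matrix

section EuclideanCoordinates

variable {ι κ : Type*} [Fintype κ] [DecidableEq κ] {E F : Type*} [AddCommGroup E] [Module ℝ E]
  [AddCommGroup F] [Module ℝ F] {𝓕 𝓖 : Type*}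

theorem map_eq_sum_smul_euclideanSingle [FunLike 𝓕 (EuclideanSpace ℝ κ) E]
    [LinearMapClass 𝓕 ℝ (EuclideanSpace ℝ κ) E] (T : 𝓕) (x : EuclideanSpace ℝ κ) :
    T x = ∑ j, x j • T (EuclideanSpace.single j 1) := by
  conv_lhs => rw [← (EuclideanSpace.basisFun κ ℝ).sum_repr x]
  simp [EuclideanSpace.basisFun_apply]

theorem ofLp_map_eq_mulVec [FunLike 𝓕 (EuclideanSpace ℝ κ) (EuclideanSpace ℝ ι)]
    [LinearMapClass 𝓕 ℝ (EuclideanSpace ℝ κ) (EuclideanSpace ℝ ι)] (L : 𝓕)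
    (v : EuclideanSpace ℝ κ) :
    (L v).ofLp = (Matrix.of fun i j => L (EuclideanSpace.single j 1) i) *ᵥ v.ofLp := by
  ext i
  rw [map_eq_sum_smul_euclideanSingle L v]
  simp [mulVec, dotProduct, mul_comm]

theorem LinearMap.apply_apply_eq_dotProduct_mulVec [Fintype ι] [DecidableEq ι]
    [FunLike 𝓕 (EuclideanSpace ℝ ι) E] [LinearMapClass 𝓕 ℝ (EuclideanSpace ℝ ι) E]
    [FunLike 𝓖 (EuclideanSpace ℝ κ) F] [LinearMapClass 𝓖 ℝ (EuclideanSpace ℝ κ) F]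
    (β : E →ₗ[ℝ] F →ₗ[ℝ] ℝ) (A : 𝓕) (C : 𝓖) (u : EuclideanSpace ℝ ι) (v : EuclideanSpace ℝ κ) :
    β (A u) (C v) = u.ofLp ⬝ᵥ (Matrix.of fun i j =>
      β (A (EuclideanSpace.single i 1)) (C (EuclideanSpace.single j 1))) *ᵥ v.ofLp := by
  rw [map_eq_sum_smul_euclideanSingle A u, map_eq_sum_smul_euclideanSingle C v]
  simp only [map_sum, map_smul, LinearMap.sum_apply, LinearMap.smul_apply, smul_eq_mul,
    dotProduct, mulVec, of_apply, Finset.mul_sum]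
  rw [Finset.sum_comm]
  exact Finset.sum_congr rfl fun i _ => Finset.sum_congr rfl fun j _ => by ring

end EuclideanCoordinates

theorem ContinuousLinearMap.abs_inner_le_opNorm_mul {E F G : Type*} [SeminormedAddCommGroup E]
    [NormedSpace ℝ E] [SeminormedAddCommGroup F] [NormedSpace ℝ F] [NormedAddCommGroup G]
    [InnerProductSpace ℝ G] (A : E →L[ℝ] G) (T : F →L[ℝ] G) (u : E) (v : F) :
    |inner ℝ (A u) (T v)| ≤ ‖A‖ * ‖T‖ * ‖u‖ * ‖v‖ :=
  calc |inner ℝ (A u) (T v)| ≤ ‖A u‖ * ‖T v‖ := abs_real_inner_le_norm _ _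
    _ ≤ (‖A‖ * ‖u‖) * (‖T‖ * ‖v‖) := by gcongr <;> apply le_opNorm
    _ = ‖A‖ * ‖T‖ * ‖u‖ * ‖v‖ := by ring

theorem natural_vs_galerkin_hodge_general
    {V W : Type*} [NormedAddCommGroup V] [InnerProductSpace ℝ V]
    [NormedAddCommGroup W] [InnerProductSpace ℝ W]
    (B : W →ₗ[ℝ] V →ₗ[ℝ] ℝ)
    (hodge : V →L[ℝ] W) (ε : ℝ)
    (hhodge : ∀ (w : W) (v : V), (inner ℝ w (hodge v) : ℝ) = ε * B w v)
    {N M : ℕ}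
    (I : EuclideanSpace ℝ (Fin N) →L[ℝ] V)
    (σt : W →L[ℝ] EuclideanSpace ℝ (Fin M))
    (It : EuclideanSpace ℝ (Fin M) →L[ℝ] W)
    (MW : Matrix (Fin M) (Fin M) ℝ)
    (hMW : ∀ i j, MW i j =
      (inner ℝ (It (EuclideanSpace.single i 1)) (It (EuclideanSpace.single j 1)) : ℝ))
    (MP : Matrix (Fin M) (Fin N) ℝ)
    (hMP : ∀ i j, MP i j =
      B (It (EuclideanSpace.single i 1)) (I (EuclideanSpace.single j 1)))
    (Ht : Matrix (Fin M) (Fin N) ℝ)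
    (hHt : ∀ i j, Ht i j = σt (hodge (I (EuclideanSpace.single j 1))) i)
    (u : EuclideanSpace ℝ (Fin M)) (v : EuclideanSpace ℝ (Fin N)) :
    |(∑ i, u i * ∑ j, (MW * Ht) i j * v j) - ε * ∑ i, u i * ∑ j, MP i j * v j| ≤
      ‖ContinuousLinearMap.id ℝ W - It.comp σt‖ * ‖It‖ * ‖hodge‖ * ‖I‖ * ‖u‖ * ‖v‖ := by
  set P := ContinuousLinearMap.id ℝ W - It.comp σt
  have hHodge : (σt (hodge (I v))).ofLp = Ht *ᵥ v.ofLp := by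
    rw [← ContinuousLinearMap.comp_apply σt, ← (σt ∘L hodge).comp_apply, ofLp_map_eq_mulVec]
    congr 1
    ext i j
    exact (hHt i j).symm
  have hGram : u.ofLp ⬝ᵥ (MW * Ht) *ᵥ v.ofLp = inner ℝ (It u) (It (σt (hodge (I v)))) := by
    rw [← innerₗ_apply_apply, (innerₗ W).apply_apply_eq_dotProduct_mulVec, hHodge,
      mulVec_mulVec]
    congr 3
    ext i j
    exact hMW i j
  have hPoincare : ε * (u.ofLp ⬝ᵥ MP *ᵥ v.ofLp) = inner ℝ (It u) (hodge (I v)) := by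
    rw [hhodge, B.apply_apply_eq_dotProduct_mulVec]
    congr 3
    ext i j
    exact hMP i j
  change |u.ofLp ⬝ᵥ (MW * Ht) *ᵥ v.ofLp - ε * (u.ofLp ⬝ᵥ MP *ᵥ v.ofLp)| ≤ _
  calc _ = |inner ℝ (It u) ((P ∘L hodge ∘L I) v)| := by
        rw [hGram, hPoincare, ← abs_neg]
        simp [P, inner_sub_right]
    _ ≤ ‖It‖ * ‖P ∘L hodge ∘L I‖ * ‖u‖ * ‖v‖ := It.abs_inner_le_opNorm_mul _ u v
    _ ≤ ‖It‖ * (‖P‖ * (‖hodge‖ * ‖I‖)) * ‖u‖ * ‖v‖ := by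
        gcongr
        exact (P.opNorm_comp_le _).trans (by gcongr; exact hodge.opNorm_comp_le I)
    _ = ‖P‖ * ‖It‖ * ‖hodge‖ * ‖I‖ * ‖u‖ * ‖v‖ := by ring

/-- The natural discrete Hodge matrix `H̃` and the Galerkin projection
discrete Hodge data `(M̃_W)⁻¹ ε M̃_P` agree up to the projection error:
`|ũᵀ M̃_W H̃ v − ε ũᵀ M̃_P v| ≤ ‖id_W − Ĩ∘σ̃‖ ‖Ĩ‖ ‖⋆‖ ‖I‖ ‖ũ‖ ‖v‖`. -/
theorem natural_vs_galerkin_hodge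
    {V W : Type*} [NormedAddCommGroup V] [InnerProductSpace ℝ V]
    [NormedAddCommGroup W] [InnerProductSpace ℝ W]
    (B : W →ₗ[ℝ] V →ₗ[ℝ] ℝ)
    (hodge : V →L[ℝ] W) (ε : ℝ) (hε : ε = 1 ∨ ε = -1)
    (hhodge : ∀ (w : W) (v : V), (inner ℝ w (hodge v) : ℝ) = ε * B w v)
    {N M : ℕ}
    (I : EuclideanSpace ℝ (Fin N) →L[ℝ] V)
    (σt : W →L[ℝ] EuclideanSpace ℝ (Fin M))
    (It : EuclideanSpace ℝ (Fin M) →L[ℝ] W)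
    (hσIt : ∀ c, σt (It c) = c)
    (MW : Matrix (Fin M) (Fin M) ℝ)
    (hMW : ∀ i j, MW i j =
      (inner ℝ (It (EuclideanSpace.single i 1)) (It (EuclideanSpace.single j 1)) : ℝ))
    (MP : Matrix (Fin M) (Fin N) ℝ)
    (hMP : ∀ i j, MP i j =
      B (It (EuclideanSpace.single i 1)) (I (EuclideanSpace.single j 1)))
    (Ht : Matrix (Fin M) (Fin N) ℝ)
    (hHt : ∀ i j, Ht i j = σt (hodge (I (EuclideanSpace.single j 1))) i)
    (u : EuclideanSpace ℝ (Fin M)) (v : EuclideanSpace ℝ (Fin N)) :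
    |(∑ i, u i * ∑ j, (MW * Ht) i j * v j) - ε * ∑ i, u i * ∑ j, MP i j * v j| ≤
      ‖ContinuousLinearMap.id ℝ W - It.comp σt‖ * ‖It‖ * ‖hodge‖ * ‖I‖ * ‖u‖ * ‖v‖ :=
  natural_vs_galerkin_hodge_general B hodge ε hhodge I σt It MW hMW MP hMP Ht hHt u v
end

section
/- Let K : V → ℝ be Fréchet differentiable, let u ∈ V, and let g ∈ ℝ^M be such that the Fréchet derivative of K ∘ I at σ(u) is the linear map c ↦ gᵀ M̃ c on ℝ^N (g is the discrete twisted functional derivative of K). Then: (a) for all v ∈ V, the Fréchet derivative of K ∘ Π at u satisfies D(K∘Π)[u](v) = B(Ĩ g, Π v); and consequently (b) |D(K∘Π)[u](v) − B(Ĩ g, v)| ≤ ‖id_V − Π‖ · ‖Ĩ g‖ · ‖v‖ for all v ∈ V. In other words, the twisted functional derivative of the projected functional K ∘ Π equals the adjoint of σ applied to the discrete functional derivative, and is approximated by Ĩ g with error controlled by the projection error (the paper's Proposition on discrete functional derivatives). -/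
/-!
By the chain rule, `D(K ∘ I ∘ σ)[u] v = D(K ∘ I)[σ u] (σ v)`, and expanding `B (Ĩ g) (I c)` in the
standard bases gives exactly `gᵀ M̃ c`; this is (a). For (b), `B (Ĩ g) (Π v) - B (Ĩ g) v` is
`-B (Ĩ g) ((id - Π) v)`, which the bound on `B` and the operator norm of `id - Π` control.
-/

theorem EuclideanSpace.bilinear_apply_eq_sum {𝕜 ι κ : Type*} [RCLike 𝕜]
    [Fintype ι] [Fintype κ] [DecidableEq ι] [DecidableEq κ]
    (b : EuclideanSpace 𝕜 ι →L[𝕜] EuclideanSpace 𝕜 κ →L[𝕜] 𝕜)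
    (x : EuclideanSpace 𝕜 ι) (y : EuclideanSpace 𝕜 κ) :
    b x y = ∑ i, x i * ∑ j, b (single i 1) (single j 1) * y j := by
  conv_lhs => rw [← (basisFun ι 𝕜).sum_repr x, ← (basisFun κ 𝕜).sum_repr y]
  simp only [map_sum, map_smul, FunLike.coe_sum, Finset.sum_apply,
    FunLike.coe_smul, Pi.smul_apply, smul_eq_mul, basisFun_apply,
    basisFun_repr, Finset.mul_sum]
  rw [Finset.sum_comm]
  exact Finset.sum_congr rfl fun i _ => Finset.sum_congr rfl fun j _ => by ring

theorem abs_apply_sub_apply_le_norm_id_sub_mul {W V : Type*}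
    [NormedAddCommGroup W] [NormedSpace ℝ W] [NormedAddCommGroup V] [NormedSpace ℝ V]
    (B : W →L[ℝ] V →L[ℝ] ℝ) (hB : ∀ (w : W) (v : V), |B w v| ≤ ‖w‖ * ‖v‖)
    (P : V →L[ℝ] V) (w : W) (v : V) :
    |B w (P v) - B w v| ≤ ‖ContinuousLinearMap.id ℝ V - P‖ * ‖w‖ * ‖v‖ :=
  calc |B w (P v) - B w v| = |B w ((ContinuousLinearMap.id ℝ V - P) v)| := by
        rw [← abs_neg]; simp
    _ ≤ ‖w‖ * ‖(ContinuousLinearMap.id ℝ V - P) v‖ := hB _ _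
    _ ≤ ‖w‖ * (‖ContinuousLinearMap.id ℝ V - P‖ * ‖v‖) := by gcongr; exact ContinuousLinearMap.le_opNorm _ _
    _ = ‖ContinuousLinearMap.id ℝ V - P‖ * ‖w‖ * ‖v‖ := by ring

theorem discrete_functional_derivative_general
    {W V : Type*} [NormedAddCommGroup W] [NormedSpace ℝ W]
    [NormedAddCommGroup V] [NormedSpace ℝ V]
    (B : W →L[ℝ] V →L[ℝ] ℝ)
    (hB : ∀ (w : W) (v : V), |B w v| ≤ ‖w‖ * ‖v‖)
    {N M : ℕ}
    (σ : V →L[ℝ] EuclideanSpace ℝ (Fin N))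
    (I : EuclideanSpace ℝ (Fin N) →L[ℝ] V)
    (It : EuclideanSpace ℝ (Fin M) →L[ℝ] W)
    (Mt : Matrix (Fin M) (Fin N) ℝ)
    (hMt : ∀ i j, Mt i j =
      B (It (EuclideanSpace.single i 1)) (I (EuclideanSpace.single j 1)))
    (K : V → ℝ) (hK : Differentiable ℝ K)
    (u : V) (g : EuclideanSpace ℝ (Fin M))
    (hg : ∀ c : EuclideanSpace ℝ (Fin N),
      fderiv ℝ (fun c' => K (I c')) (σ u) c = ∑ i, g i * ∑ j, Mt i j * c j) :
    (∀ v : V, fderiv ℝ (fun x => K (I (σ x))) u v = B (It g) (I (σ v))) ∧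
      (∀ v : V, |fderiv ℝ (fun x => K (I (σ x))) u v - B (It g) v| ≤
        ‖ContinuousLinearMap.id ℝ V - I.comp σ‖ * ‖It g‖ * ‖v‖) := by
  have chain_rule : fderiv ℝ (fun x => K (I (σ x))) u =
      (fderiv ℝ (fun c => K (I c)) (σ u)).comp σ := by
    have hKI : DifferentiableAt ℝ (fun c => K (I c)) (σ u) := hK.comp I.differentiable (σ u)
    rw [fderiv_fun_comp u hKI σ.differentiableAt, σ.fderiv]
  have pairing_eq_sum (c : EuclideanSpace ℝ (Fin N)) :
      B (It g) (I c) = ∑ i, g i * ∑ j, Mt i j * c j := by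
    simp only [hMt]
    exact EuclideanSpace.bilinear_apply_eq_sum (B.bilinearComp It I) g c
  have part_a (v : V) : fderiv ℝ (fun x => K (I (σ x))) u v = B (It g) (I (σ v)) := by
    rw [chain_rule, ContinuousLinearMap.comp_apply, hg, pairing_eq_sum]
  refine ⟨part_a, fun v => ?_⟩
  rw [part_a]
  exact abs_apply_sub_apply_le_norm_id_sub_mul B hB (I.comp σ) (It g) v

/-- Discrete functional derivatives. If `K : V → ℝ` is Fréchet
differentiable and `g ∈ ℝ^M` is the discrete twisted functional derivative, i.e. the
Fréchet derivative of `K ∘ I` at `σ u` is `c ↦ gᵀ M̃ c`, then (a) the Fréchet derivative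
of `K ∘ Π` at `u` is `v ↦ B(It g, Π v)`, and (b)
`|D(K∘Π)[u](v) − B(It g, v)| ≤ ‖id_V − Π‖ ‖It g‖ ‖v‖` for all `v`. -/
theorem discrete_functional_derivative
    {W V : Type*} [NormedAddCommGroup W] [NormedSpace ℝ W]
    [NormedAddCommGroup V] [NormedSpace ℝ V]
    (B : W →L[ℝ] V →L[ℝ] ℝ)
    (hB : ∀ (w : W) (v : V), |B w v| ≤ ‖w‖ * ‖v‖)
    {N M : ℕ}
    (σ : V →L[ℝ] EuclideanSpace ℝ (Fin N))
    (I : EuclideanSpace ℝ (Fin N) →L[ℝ] V)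
    (hσI : ∀ c, σ (I c) = c)
    (It : EuclideanSpace ℝ (Fin M) →L[ℝ] W)
    (Mt : Matrix (Fin M) (Fin N) ℝ)
    (hMt : ∀ i j, Mt i j =
      B (It (EuclideanSpace.single i 1)) (I (EuclideanSpace.single j 1)))
    (K : V → ℝ) (hK : Differentiable ℝ K)
    (u : V) (g : EuclideanSpace ℝ (Fin M))
    (hg : ∀ c : EuclideanSpace ℝ (Fin N),
      fderiv ℝ (fun c' => K (I c')) (σ u) c = ∑ i, g i * ∑ j, Mt i j * c j) :
    (∀ v : V, fderiv ℝ (fun x => K (I (σ x))) u v = B (It g) (I (σ v))) ∧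
      (∀ v : V, |fderiv ℝ (fun x => K (I (σ x))) u v - B (It g) v| ≤
        ‖ContinuousLinearMap.id ℝ V - I.comp σ‖ * ‖It g‖ * ‖v‖) :=
  discrete_functional_derivative_general B hB σ I It Mt hMt K hK u g hg
end

section
/- If u : ℝ → ℝ^p is differentiable with u'(t) = c · D₁ h(t) for all t, for some function h : ℝ → ℝ^q, then the function t ↦ D₂ u(t) is constant. In particular, the spatially discretized Maxwell evolutions ∂_t d̃² = c 𝕕̃₁ h̃¹ and ∂_t b² = −c 𝕕₁ e¹ exactly and strongly conserve the discrete Gauss constraints 𝕕̃₂ d̃² and 𝕕₂ b². -/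
theorem ContinuousLinearMap.apply_eq_of_hasDerivAt_mem_ker {𝕜 E F : Type*} [RCLike 𝕜]
    [NormedAddCommGroup E] [NormedSpace 𝕜 E] [NormedAddCommGroup F] [NormedSpace 𝕜 F]
    (A : E →L[𝕜] F) {u u' : 𝕜 → E} (hu : ∀ t, HasDerivAt u (u' t) t)
    (hker : ∀ t, A (u' t) = 0) (t₁ t₂ : 𝕜) : A (u t₁) = A (u t₂) := by
  have hAu : ∀ t, HasDerivAt (A ∘ u) 0 t := fun t => by
    simpa only [hker] using A.hasFDerivAt.comp_hasDerivAt t (hu t)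
  exact is_const_of_deriv_eq_zero (fun t => (hAu t).differentiableAt)
    (fun t => (hAu t).deriv) t₁ t₂

theorem Matrix.mulVec_smul_mulVec_eq_zero {m n o R : Type*} [Fintype n] [Fintype o]
    [CommSemiring R] {A : Matrix m n R} {B : Matrix n o R} (hAB : A * B = 0) (c : R)
    (v : o → R) : A.mulVec (c • B.mulVec v) = 0 := by
  rw [Matrix.mulVec_smul, Matrix.mulVec_mulVec, hAB, Matrix.zero_mulVec, smul_zero]

/-- If `u : ℝ → ℝᵖ` is differentiable with `u'(t) = c · D₁ h(t)` and
`D₂ D₁ = 0` (consecutive incidence matrices, `d ∘ d = 0`), then `t ↦ D₂ u(t)` is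
constant: the discrete Gauss constraints are exactly conserved. -/
theorem discrete_gauss_conservation
    {p q r : ℕ} (D₁ : Matrix (Fin p) (Fin q) ℝ) (D₂ : Matrix (Fin r) (Fin p) ℝ)
    (hDD : D₂ * D₁ = 0) (c : ℝ)
    (u : ℝ → (Fin p → ℝ)) (h : ℝ → (Fin q → ℝ))
    (hu : ∀ t, HasDerivAt u (c • D₁.mulVec (h t)) t) :
    ∀ t₁ t₂ : ℝ, D₂.mulVec (u t₁) = D₂.mulVec (u t₂) :=
  (Matrix.mulVecLin D₂).toContinuousLinearMap.apply_eq_of_hasDerivAt_mem_ker hu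
    fun t => Matrix.mulVec_smul_mulVec_eq_zero hDD c (h t)
end

section
/- Suppose d̃ : ℝ → ℝ^{Ñ₁} and b : ℝ → ℝ^{N₁} are differentiable and solve the spatially discretized one-dimensional vacuum Maxwell equations d̃'(t) = c D̃ h̃(t) and b'(t) = −c D e(t), where e(t) = M₀⁻¹ M₀₁ d̃(t) and h̃(t) = M̃₀⁻¹ M̃₀₁ b(t) are the discrete constitutive relations. Then the discrete energy H(t) = (1/8π)[(M₀₁ d̃(t))ᵀ M₀⁻¹ (M₀₁ d̃(t)) + (M̃₀₁ b(t))ᵀ M̃₀⁻¹ (M̃₀₁ b(t))] is constant in time; i.e., the spatially discretized Hamiltonian system exactly conserves the discrete Hamiltonian. -/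
/-! The energy is a sum of two quadratic forms with the symmetric matrices `M₀⁻¹` and `M̃₀⁻¹`, so
its derivative is `2 (M₀₁ d̃') ⬝ e + 2 (M̃₀₁ b') ⬝ h̃`. By the equations of motion and the discrete
integration by parts identity, both terms equal `± 2c (M̃₀₁ D e) ⬝ h̃`, and they cancel. -/

open Matrix

section Calculus

variable {𝕜 : Type*} [NontriviallyNormedField 𝕜] {m n : Type*} [Fintype n] {t : 𝕜}

theorem HasDerivAt.mulVec (A : Matrix m n 𝕜) {u : 𝕜 → n → 𝕜} {u' : n → 𝕜}
    (hu : HasDerivAt u u' t) : HasDerivAt (fun s => A *ᵥ u s) (A *ᵥ u') t :=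
  hasDerivAt_pi.2 fun i =>
    HasDerivAt.fun_sum fun j _ => (hasDerivAt_pi.1 hu j).const_mul (A i j)

theorem HasDerivAt.dotProduct {u v : 𝕜 → n → 𝕜} {u' v' : n → 𝕜}
    (hu : HasDerivAt u u' t) (hv : HasDerivAt v v' t) :
    HasDerivAt (fun s => u s ⬝ᵥ v s) (u' ⬝ᵥ v t + u t ⬝ᵥ v') t := by
  simp only [_root_.dotProduct, ← Finset.sum_add_distrib]
  exact HasDerivAt.fun_sum fun i _ => (hasDerivAt_pi.1 hu i).mul (hasDerivAt_pi.1 hv i)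

theorem HasDerivAt.dotProduct_mulVec_self {S : Matrix n n 𝕜} (hS : S.IsSymm)
    {u : 𝕜 → n → 𝕜} {u' : n → 𝕜} (hu : HasDerivAt u u' t) :
    HasDerivAt (fun s => u s ⬝ᵥ S *ᵥ u s) (2 * (u' ⬝ᵥ S *ᵥ u t)) t := by
  convert hu.dotProduct (hu.mulVec S) using 1
  rw [two_mul, ← dotProduct_transpose_mulVec S (u t) u', hS.eq]

end Calculus

theorem mulVec_mulVec_dotProduct_eq_of_transpose_mul_eq {R : Type*} [CommRing R]
    {k l m n : Type*} [Fintype k] [Fintype l] [Fintype m] [Fintype n]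
    {A : Matrix m k R} {B : Matrix k n R} {C : Matrix n l R} {E : Matrix l m R}
    (h : (A * B)ᵀ = C * E) (x : n → R) (y : m → R) :
    A *ᵥ (B *ᵥ x) ⬝ᵥ y = C *ᵥ (E *ᵥ y) ⬝ᵥ x := by
  rw [mulVec_mulVec, mulVec_mulVec, ← h, dotProduct_comm _ x, dotProduct_transpose_mulVec,
    dotProduct_comm]

theorem discrete_maxwell_energy_conservation_general
    {N₀ N₁ Nt₀ Nt₁ : ℕ}
    (M₀ : Matrix (Fin N₀) (Fin N₀) ℝ) (Mt₀ : Matrix (Fin Nt₀) (Fin Nt₀) ℝ)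
    (hM₀sym : M₀.IsSymm) (hMt₀sym : Mt₀.IsSymm)
    (M₀₁ : Matrix (Fin N₀) (Fin Nt₁) ℝ) (Mt₀₁ : Matrix (Fin Nt₀) (Fin N₁) ℝ)
    (D : Matrix (Fin N₁) (Fin N₀) ℝ) (Dt : Matrix (Fin Nt₁) (Fin Nt₀) ℝ)
    (hibp : (M₀₁ * Dt).transpose = Mt₀₁ * D)
    (c : ℝ)
    (dt : ℝ → (Fin Nt₁ → ℝ)) (b : ℝ → (Fin N₁ → ℝ))
    (e : ℝ → (Fin N₀ → ℝ)) (ht : ℝ → (Fin Nt₀ → ℝ))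
    (he : ∀ t, e t = M₀⁻¹.mulVec (M₀₁.mulVec (dt t)))
    (hht : ∀ t, ht t = Mt₀⁻¹.mulVec (Mt₀₁.mulVec (b t)))
    (hdt : ∀ t, HasDerivAt dt (c • Dt.mulVec (ht t)) t)
    (hb : ∀ t, HasDerivAt b (-(c • D.mulVec (e t))) t) :
    ∀ t₁ t₂ : ℝ,
      (1 / (8 * Real.pi)) *
          ((M₀₁.mulVec (dt t₁)) ⬝ᵥ (M₀⁻¹.mulVec (M₀₁.mulVec (dt t₁))) +
            (Mt₀₁.mulVec (b t₁)) ⬝ᵥ (Mt₀⁻¹.mulVec (Mt₀₁.mulVec (b t₁)))) =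
        (1 / (8 * Real.pi)) *
          ((M₀₁.mulVec (dt t₂)) ⬝ᵥ (M₀⁻¹.mulVec (M₀₁.mulVec (dt t₂))) +
            (Mt₀₁.mulVec (b t₂)) ⬝ᵥ (Mt₀⁻¹.mulVec (Mt₀₁.mulVec (b t₂)))) := by
  intro t₁ t₂
  have hH : ∀ t, HasDerivAt (fun s =>
      M₀₁ *ᵥ dt s ⬝ᵥ M₀⁻¹ *ᵥ (M₀₁ *ᵥ dt s) + Mt₀₁ *ᵥ b s ⬝ᵥ Mt₀⁻¹ *ᵥ (Mt₀₁ *ᵥ b s)) 0 t := by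
    intro t
    have hElectric := ((hdt t).mulVec M₀₁).dotProduct_mulVec_self hM₀sym.inv
    have hMagnetic := ((hb t).mulVec Mt₀₁).dotProduct_mulVec_self hMt₀sym.inv
    rw [← he t] at hElectric
    rw [← hht t] at hMagnetic
    refine (hElectric.add hMagnetic).congr_deriv ?_
    rw [mulVec_smul, mulVec_neg, mulVec_smul, neg_dotProduct, smul_dotProduct, smul_dotProduct,
      mulVec_mulVec_dotProduct_eq_of_transpose_mul_eq hibp, smul_eq_mul]
    ring
  rw [is_const_of_deriv_eq_zero (fun t => (hH t).differentiableAt) (fun t => (hH t).deriv) t₁ t₂]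

/-- The spatially discretized 1D vacuum Maxwell equations
`d̃' = c D̃ h̃`, `b' = −c D e` with discrete constitutive relations
`e = M₀⁻¹ M₀₁ d̃`, `h̃ = M̃₀⁻¹ M̃₀₁ b` exactly conserve the discrete energy
`H = (1/8π)[(M₀₁ d̃)ᵀ M₀⁻¹ (M₀₁ d̃) + (M̃₀₁ b)ᵀ M̃₀⁻¹ (M̃₀₁ b)]`. -/
theorem discrete_maxwell_energy_conservation
    {N₀ N₁ Nt₀ Nt₁ : ℕ}
    (M₀ : Matrix (Fin N₀) (Fin N₀) ℝ) (Mt₀ : Matrix (Fin Nt₀) (Fin Nt₀) ℝ)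
    (hM₀sym : M₀.IsSymm) (hMt₀sym : Mt₀.IsSymm)
    (hM₀ : IsUnit M₀) (hMt₀ : IsUnit Mt₀)
    (M₀₁ : Matrix (Fin N₀) (Fin Nt₁) ℝ) (Mt₀₁ : Matrix (Fin Nt₀) (Fin N₁) ℝ)
    (D : Matrix (Fin N₁) (Fin N₀) ℝ) (Dt : Matrix (Fin Nt₁) (Fin Nt₀) ℝ)
    (hibp : (M₀₁ * Dt).transpose = Mt₀₁ * D)
    (c : ℝ)
    (dt : ℝ → (Fin Nt₁ → ℝ)) (b : ℝ → (Fin N₁ → ℝ))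
    (e : ℝ → (Fin N₀ → ℝ)) (ht : ℝ → (Fin Nt₀ → ℝ))
    (he : ∀ t, e t = M₀⁻¹.mulVec (M₀₁.mulVec (dt t)))
    (hht : ∀ t, ht t = Mt₀⁻¹.mulVec (Mt₀₁.mulVec (b t)))
    (hdt : ∀ t, HasDerivAt dt (c • Dt.mulVec (ht t)) t)
    (hb : ∀ t, HasDerivAt b (-(c • D.mulVec (e t))) t) :
    ∀ t₁ t₂ : ℝ,
      (1 / (8 * Real.pi)) *
          ((M₀₁.mulVec (dt t₁)) ⬝ᵥ (M₀⁻¹.mulVec (M₀₁.mulVec (dt t₁))) +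
            (Mt₀₁.mulVec (b t₁)) ⬝ᵥ (Mt₀⁻¹.mulVec (Mt₀₁.mulVec (b t₁)))) =
        (1 / (8 * Real.pi)) *
          ((M₀₁.mulVec (dt t₂)) ⬝ᵥ (M₀⁻¹.mulVec (M₀₁.mulVec (dt t₂))) +
            (Mt₀₁.mulVec (b t₂)) ⬝ᵥ (Mt₀⁻¹.mulVec (Mt₀₁.mulVec (b t₂)))) :=
  discrete_maxwell_energy_conservation_general M₀ Mt₀ hM₀sym hMt₀sym M₀₁ Mt₀₁ D Dt hibp c dt b e ht
    he hht hdt hb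
end

section
/- Let U ⊆ ℝⁿ × ℝᵐ be open and let Ψ : U → ℝⁿ × ℝᵐ be differentiable with Φ(Ψ(x)) = x for all x ∈ U (so Ψ inverts the change of variables (e, β) ↦ (d*, β); the second component of Ψ(d, β) is necessarily β). Then for every (d, β) ∈ U, writing e = Ψ₁(d, β) for the first component of Ψ(d, β), the transformed Hamiltonian H̄ = H ∘ Ψ satisfies ∇_d H̄(d, β) = e/4π and ∇_β H̄(d, β) = (1/4π) M̃⁻¹ β + ∇_β K(e, β). That is, the gradients of the discrete Hamiltonian with respect to the bracket variables are e/4π and h̃/4π, where h̃ = M̃⁻¹β + 4π ∇_β K. -/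
/-!
Substituting `d = Φ₁(e, β)` turns `H` into `G = extendedHamiltonian`,
`G(e, d, β) = K(e, β) + e·d/4π − eᵀMe/8π + βᵀM̃⁻¹β/8π`, so near every point of `U`
the transformed Hamiltonian is `H̄(d, β) = G(Ψ₁(d, β), d, β)`. As `M` is symmetric,
`∇_e G(e, d, β) = (d − Φ₁(e, β))/4π`, which vanishes at `e = Ψ₁(d, β)`: in the chain rule the
derivative of `Ψ₁` drops out (envelope theorem), and the gradients of `H̄` are the partial
gradients `∇_d G = e/4π` and `∇_β G = M̃⁻¹β/4π + ∇_β K` of `G`.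
-/

/-- Partial gradient `∇_e K(e, β)` of `K : ℝⁿ × ℝᵐ → ℝ` in the first variable. -/
noncomputable def gradE {n m : ℕ} (K : (Fin n → ℝ) → (Fin m → ℝ) → ℝ)
    (e : Fin n → ℝ) (β : Fin m → ℝ) : Fin n → ℝ :=
  fun i => fderiv ℝ (fun e' => K e' β) e (Pi.single i 1)

/-- Partial gradient `∇_β K(e, β)` of `K : ℝⁿ × ℝᵐ → ℝ` in the second variable. -/
noncomputable def gradB {n m : ℕ} (K : (Fin n → ℝ) → (Fin m → ℝ) → ℝ)
    (e : Fin n → ℝ) (β : Fin m → ℝ) : Fin m → ℝ :=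
  fun j => fderiv ℝ (fun β' => K e β') β (Pi.single j 1)

/-- The discrete Hamiltonian
`H(e, β) = K(e, β) − eᵀ ∇_e K(e, β) + (1/8π)(eᵀ M e + βᵀ M̃⁻¹ β)`. -/
noncomputable def Hdisc {n m : ℕ} (K : (Fin n → ℝ) → (Fin m → ℝ) → ℝ)
    (M : Matrix (Fin n) (Fin n) ℝ) (Mt : Matrix (Fin m) (Fin m) ℝ)
    (e : Fin n → ℝ) (β : Fin m → ℝ) : ℝ :=
  K e β - ∑ i, e i * gradE K e β i +
    (1 / (8 * Real.pi)) *
      ((∑ i, ∑ j, e i * M i j * e j) + ∑ i, ∑ j, β i * Mt⁻¹ i j * β j)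

/-- The change of variables `Φ(e, β) = (M e − 4π ∇_e K(e, β), β)` (the discrete
constitutive relation of the macroscopic Maxwell equations). -/
noncomputable def Phidisc {n m : ℕ} (K : (Fin n → ℝ) → (Fin m → ℝ) → ℝ)
    (M : Matrix (Fin n) (Fin n) ℝ) :
    (Fin n → ℝ) × (Fin m → ℝ) → (Fin n → ℝ) × (Fin m → ℝ) :=
  fun p => (fun i => (∑ j, M i j * p.1 j) - 4 * Real.pi * gradE K p.1 p.2 i, p.2)


open ContinuousLinearMap Filter Real Topology

theorem ContinuousLinearMap.eq_zero_of_forall_apply_single {ι R M : Type*} [Finite ι]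
    [DecidableEq ι] [Semiring R] [TopologicalSpace R] [AddCommMonoid M] [Module R M]
    [TopologicalSpace M] (L : (ι → R) →L[R] M) (h : ∀ i, L (Pi.single i 1) = 0) : L = 0 :=
  coe_injective <| LinearMap.pi_ext fun i x => by
    rw [← mul_one x, ← smul_eq_mul, Pi.single_smul']
    simp [h]

theorem Matrix.hasFDerivAt_quadForm {𝕜 ι : Type*} [NontriviallyNormedField 𝕜] [Fintype ι]
    (A : Matrix ι ι 𝕜) (x : ι → 𝕜) :
    HasFDerivAt (fun y : ι → 𝕜 => ∑ i, ∑ j, y i * A i j * y j)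
      (∑ i, ∑ j, ((x i * A i j) • proj j + (A i j * x j) • proj i : (ι → 𝕜) →L[𝕜] 𝕜)) x := by
  refine (HasFDerivAt.fun_sum fun i _ => HasFDerivAt.fun_sum fun j _ =>
    ((hasFDerivAt_apply i x).mul_const (A i j)).mul (hasFDerivAt_apply j x)).congr_fderiv ?_
  ext v
  simp only [_root_.sum_apply, _root_.add_apply, _root_.smul_apply, proj_apply, smul_eq_mul]
  exact Finset.sum_congr rfl fun i _ => Finset.sum_congr rfl fun j _ => by ring

theorem Matrix.IsSymm.fderiv_quadForm_single {𝕜 ι : Type*} [NontriviallyNormedField 𝕜]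
    [Fintype ι] [DecidableEq ι] {A : Matrix ι ι 𝕜} (hA : A.IsSymm) (x : ι → 𝕜) (k : ι) :
    fderiv 𝕜 (fun y : ι → 𝕜 => ∑ i, ∑ j, y i * A i j * y j) x (Pi.single k 1) =
      2 * ∑ j, A k j * x j := by
  rw [(A.hasFDerivAt_quadForm x).fderiv]
  simp only [_root_.sum_apply, _root_.add_apply, _root_.smul_apply, proj_apply, smul_eq_mul,
    Pi.single_apply, mul_ite, mul_one, mul_zero, Finset.sum_ite_eq', Finset.sum_ite_irrel,
    Finset.sum_const_zero, Finset.mem_univ, ↓reduceIte, Finset.sum_add_distrib, hA.apply k,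
    mul_comm (x _)]
  ring

section PartialDerivatives

variable {𝕜 E X F : Type*} [NontriviallyNormedField 𝕜] [NormedAddCommGroup E] [NormedSpace 𝕜 E]
  [NormedAddCommGroup X] [NormedSpace 𝕜 X] [NormedAddCommGroup F] [NormedSpace 𝕜 F]

theorem HasFDerivAt.fderiv_comp_prodMk_left {f : E × X → F} {L : E × X →L[𝕜] F} {a : E} {b : X}
    (hf : HasFDerivAt f L (a, b)) : fderiv 𝕜 (fun a' => f (a', b)) a = L.comp (inl 𝕜 E X) :=
  (hf.comp (f := fun a' => (a', b)) a (hasFDerivAt_prodMk_left a b)).fderiv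

theorem HasFDerivAt.fderiv_comp_prodMk_right {f : E × X → F} {L : E × X →L[𝕜] F} {a : E} {b : X}
    (hf : HasFDerivAt f L (a, b)) : fderiv 𝕜 (fun b' => f (a, b')) b = L.comp (inr 𝕜 E X) :=
  (hf.comp (f := fun b' => (a, b')) b (hasFDerivAt_prodMk_right a b)).fderiv

theorem HasFDerivAt.comp_of_fderiv_fst_eq_zero {G : E → X → F} {ψ : X → E} {x : X}
    (hG : DifferentiableAt 𝕜 (fun p : E × X => G p.1 p.2) (ψ x, x))
    (hψ : DifferentiableAt 𝕜 ψ x) (hcrit : fderiv 𝕜 (fun e => G e x) (ψ x) = 0) :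
    HasFDerivAt (fun y => G (ψ y) y) (fderiv 𝕜 (G (ψ x)) x) x := by
  set L := fderiv 𝕜 (fun p : E × X => G p.1 p.2) (ψ x, x)
  have hfst : L.comp (inl 𝕜 E X) = 0 := hcrit ▸ hG.hasFDerivAt.fderiv_comp_prodMk_left.symm
  have hsnd : L.comp (inr 𝕜 E X) = fderiv 𝕜 (G (ψ x)) x :=
    hG.hasFDerivAt.fderiv_comp_prodMk_right.symm
  refine (hG.hasFDerivAt.comp (f := fun y => (ψ y, y)) x
    (hψ.hasFDerivAt.prodMk (hasFDerivAt_id x))).congr_fderiv ?_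
  ext v
  have hv := congrArg (fun T : E →L[𝕜] F => T (fderiv 𝕜 ψ x v)) hfst
  rw [← hsnd]
  simp only [comp_apply, inl_apply, inr_apply, zero_apply, prod_apply, coe_id', id_eq] at hv ⊢
  rw [← add_zero (L (0, v)), ← hv, ← L.map_add, Prod.mk_add_mk, add_zero, zero_add]

end PartialDerivatives

section ExtendedHamiltonian

variable {n m : ℕ} (K : (Fin n → ℝ) → (Fin m → ℝ) → ℝ) (M : Matrix (Fin n) (Fin n) ℝ)
  (Mt : Matrix (Fin m) (Fin m) ℝ)

noncomputable def extendedHamiltonian (e d : Fin n → ℝ) (β : Fin m → ℝ) : ℝ :=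
  K e β + 1 / (4 * π) * ∑ i, e i * d i - 1 / (8 * π) * ∑ i, ∑ j, e i * M i j * e j
    + 1 / (8 * π) * ∑ i, ∑ j, β i * Mt⁻¹ i j * β j

theorem Hdisc_eq_extendedHamiltonian {p x : (Fin n → ℝ) × (Fin m → ℝ)}
    (h : Phidisc K M p = x) : Hdisc K M Mt p.1 p.2 = extendedHamiltonian K M Mt p.1 x.1 x.2 := by
  subst h
  have hquad : ∑ i, p.1 i * ∑ j, M i j * p.1 j = ∑ i, ∑ j, p.1 i * M i j * p.1 j := by
    simp only [Finset.mul_sum, mul_assoc]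
  have hgrad : ∑ i, p.1 i * (4 * π * gradE K p.1 p.2 i) =
      4 * π * ∑ i, p.1 i * gradE K p.1 p.2 i := by
    rw [Finset.mul_sum]
    exact Finset.sum_congr rfl fun i _ => by ring
  simp only [Hdisc, extendedHamiltonian, Phidisc, mul_sub, Finset.sum_sub_distrib, hquad, hgrad]
  field_simp
  ring

theorem fderiv_extendedHamiltonian_e_eq_zero (hM : M.IsSymm) {e d : Fin n → ℝ} {β : Fin m → ℝ}
    (hK : DifferentiableAt ℝ (fun e' => K e' β) e) (hd : (Phidisc K M (e, β)).1 = d) :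
    fderiv ℝ (fun e' => extendedHamiltonian K M Mt e' d β) e = 0 := by
  have hlin : HasFDerivAt (fun e' : Fin n → ℝ => ∑ i, e' i * d i)
      (∑ i, d i • (proj i : (Fin n → ℝ) →L[ℝ] ℝ)) e :=
    HasFDerivAt.fun_sum fun i _ => (hasFDerivAt_apply i e).mul_const (d i)
  have hquad := (M.hasFDerivAt_quadForm e).differentiableAt.hasFDerivAt
  have hG : HasFDerivAt (fun e' => extendedHamiltonian K M Mt e' d β) _ e :=
    ((hK.hasFDerivAt.add (hlin.const_mul _)).sub (hquad.const_mul _)).add_const _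
  rw [hG.fderiv]
  refine eq_zero_of_forall_apply_single _ fun k => ?_
  subst hd
  simp only [Phidisc, gradE, sub_apply, _root_.add_apply, _root_.smul_apply, _root_.sum_apply,
    proj_apply, Pi.single_apply, smul_eq_mul, mul_ite, mul_one, mul_zero, Finset.sum_ite_eq',
    Finset.mem_univ, ↓reduceIte, hM.fderiv_quadForm_single]
  field_simp
  ring

theorem fderiv_extendedHamiltonian_d_single (e d : Fin n → ℝ) (β : Fin m → ℝ) (i : Fin n) :
    fderiv ℝ (fun d' => extendedHamiltonian K M Mt e d' β) d (Pi.single i 1) = e i / (4 * π) := by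
  have hlin : HasFDerivAt (fun d' : Fin n → ℝ => ∑ i, e i * d' i)
      (∑ i, e i • (proj i : (Fin n → ℝ) →L[ℝ] ℝ)) d :=
    HasFDerivAt.fun_sum fun i _ => (hasFDerivAt_apply i d).const_mul (e i)
  have hG : HasFDerivAt (fun d' => extendedHamiltonian K M Mt e d' β) _ d :=
    (((hasFDerivAt_const _ _).add (hlin.const_mul _)).sub_const _).add_const _
  rw [hG.fderiv]
  simp only [zero_add, _root_.smul_apply, _root_.sum_apply, proj_apply, Pi.single_apply,
    smul_eq_mul, mul_ite, mul_one, mul_zero, Finset.sum_ite_eq', Finset.mem_univ, ↓reduceIte]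
  field_simp

theorem fderiv_extendedHamiltonian_β_single (hMt : Mt.IsSymm) {e d : Fin n → ℝ} {β : Fin m → ℝ}
    (hK : DifferentiableAt ℝ (K e) β) (j : Fin m) :
    fderiv ℝ (fun β' => extendedHamiltonian K M Mt e d β') β (Pi.single j 1) =
      1 / (4 * π) * ∑ l, Mt⁻¹ j l * β l + gradB K e β j := by
  have hquad := (Mt⁻¹.hasFDerivAt_quadForm β).differentiableAt.hasFDerivAt
  have hG : HasFDerivAt (fun β' => extendedHamiltonian K M Mt e d β') _ β :=
    ((hK.hasFDerivAt.add_const _).sub_const _).add (hquad.const_mul _)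
  rw [hG.fderiv]
  simp only [_root_.add_apply, _root_.smul_apply, hMt.inv.fderiv_quadForm_single, smul_eq_mul,
    gradB]
  field_simp
  ring

end ExtendedHamiltonian

theorem gradients_of_transformed_discrete_hamiltonian_general
    {n m : ℕ} (K : (Fin n → ℝ) → (Fin m → ℝ) → ℝ)
    (hK : ContDiff ℝ 2 (fun p : (Fin n → ℝ) × (Fin m → ℝ) => K p.1 p.2))
    (M : Matrix (Fin n) (Fin n) ℝ) (Mt : Matrix (Fin m) (Fin m) ℝ)
    (hMsym : M.IsSymm) (hMtsym : Mt.IsSymm)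
    (U : Set ((Fin n → ℝ) × (Fin m → ℝ))) (hU : IsOpen U)
    (Ψ : (Fin n → ℝ) × (Fin m → ℝ) → (Fin n → ℝ) × (Fin m → ℝ))
    (hΨdiff : ∀ x ∈ U, DifferentiableAt ℝ Ψ x)
    (hΦΨ : ∀ x ∈ U, Phidisc K M (Ψ x) = x) :
    ∀ (d : Fin n → ℝ) (β : Fin m → ℝ), (d, β) ∈ U →
      (∀ i, fderiv ℝ (fun d' => Hdisc K M Mt (Ψ (d', β)).1 (Ψ (d', β)).2) d
          (Pi.single i 1) = (Ψ (d, β)).1 i / (4 * Real.pi)) ∧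
      (∀ j, fderiv ℝ (fun β' => Hdisc K M Mt (Ψ (d, β')).1 (Ψ (d, β')).2) β
          (Pi.single j 1) =
        (1 / (4 * Real.pi)) * (∑ l, Mt⁻¹ j l * β l) +
          gradB K ((Ψ (d, β)).1) β j) := by
  intro d β hx
  have hKdiff : Differentiable ℝ (fun p : (Fin n → ℝ) × (Fin m → ℝ) => K p.1 p.2) :=
    hK.differentiable (by norm_num)
  have hΨx := hΨdiff _ hx
  set e := (Ψ (d, β)).1
  have hΨe : Ψ (d, β) = (e, β) := Prod.ext rfl (congrArg Prod.snd (hΦΨ _ hx) :)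
  have hcrit : fderiv ℝ (fun e' => extendedHamiltonian K M Mt e' d β) e = 0 :=
    fderiv_extendedHamiltonian_e_eq_zero K M Mt hMsym (by fun_prop) (by rw [← hΨe, hΦΨ _ hx])
  have hHG : (fun y => Hdisc K M Mt (Ψ y).1 (Ψ y).2) =ᶠ[𝓝 (d, β)]
      fun y => extendedHamiltonian K M Mt (Ψ y).1 y.1 y.2 :=
    eventually_of_mem (hU.mem_nhds hx) fun y hy => Hdisc_eq_extendedHamiltonian K M Mt (hΦΨ y hy)
  have hH := (HasFDerivAt.comp_of_fderiv_fst_eq_zero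
    (G := fun e' (y : (Fin n → ℝ) × (Fin m → ℝ)) => extendedHamiltonian K M Mt e' y.1 y.2)
    (by unfold extendedHamiltonian; fun_prop) (by fun_prop) hcrit).congr_of_eventuallyEq hHG
  have hG : HasFDerivAt
      (fun y : (Fin n → ℝ) × (Fin m → ℝ) => extendedHamiltonian K M Mt e y.1 y.2) _ (d, β) :=
    (by unfold extendedHamiltonian; fun_prop : DifferentiableAt ℝ _ _).hasFDerivAt
  refine ⟨fun i => ?_, fun j => ?_⟩
  · rw [hH.fderiv_comp_prodMk_left, ← hG.fderiv_comp_prodMk_left]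
    exact fderiv_extendedHamiltonian_d_single K M Mt e d β i
  · rw [hH.fderiv_comp_prodMk_right, ← hG.fderiv_comp_prodMk_right]
    exact fderiv_extendedHamiltonian_β_single K M Mt hMtsym (by fun_prop) j

/-- If `Ψ`, differentiable on the open set `U`, inverts the change of
variables `Φ` (i.e. `Φ(Ψ(x)) = x` on `U`), then, writing `e = Ψ₁(d, β)`, the
transformed Hamiltonian `H̄ = H ∘ Ψ` satisfies `∇_d H̄(d, β) = e/4π` and
`∇_β H̄(d, β) = (1/4π) M̃⁻¹ β + ∇_β K(e, β)`. -/
theorem gradients_of_transformed_discrete_hamiltonian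
    {n m : ℕ} (K : (Fin n → ℝ) → (Fin m → ℝ) → ℝ)
    (hK : ContDiff ℝ 2 (fun p : (Fin n → ℝ) × (Fin m → ℝ) => K p.1 p.2))
    (M : Matrix (Fin n) (Fin n) ℝ) (Mt : Matrix (Fin m) (Fin m) ℝ)
    (hMsym : M.IsSymm) (hMtsym : Mt.IsSymm) (hM : IsUnit M) (hMt : IsUnit Mt)
    (U : Set ((Fin n → ℝ) × (Fin m → ℝ))) (hU : IsOpen U)
    (Ψ : (Fin n → ℝ) × (Fin m → ℝ) → (Fin n → ℝ) × (Fin m → ℝ))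
    (hΨdiff : ∀ x ∈ U, DifferentiableAt ℝ Ψ x)
    (hΦΨ : ∀ x ∈ U, Phidisc K M (Ψ x) = x) :
    ∀ (d : Fin n → ℝ) (β : Fin m → ℝ), (d, β) ∈ U →
      (∀ i, fderiv ℝ (fun d' => Hdisc K M Mt (Ψ (d', β)).1 (Ψ (d', β)).2) d
          (Pi.single i 1) = (Ψ (d, β)).1 i / (4 * Real.pi)) ∧
      (∀ j, fderiv ℝ (fun β' => Hdisc K M Mt (Ψ (d, β')).1 (Ψ (d, β')).2) β
          (Pi.single j 1) =
        (1 / (4 * Real.pi)) * (∑ l, Mt⁻¹ j l * β l) +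
          gradB K ((Ψ (d, β)).1) β j) :=
  gradients_of_transformed_discrete_hamiltonian_general K hK M Mt hMsym hMtsym U hU Ψ hΨdiff hΦΨ
end
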